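/- arXiv:math/0410604 — 2 statements merged into one kernel-verified Lean document; each statement's English description precedes it below -/
import Mathlib

section
/- If P is a 2×2×2 tensor of the form P(i,j,k) = Σ_{b=1}^{2} M1(b,i)·M2(b,j)·M3(b,k) for some 2×2 complex matrices M1, M2, M3, then every flattening of P into a 2×4 matrix (grouping two of the three indices together as the column index) has rank at most 2 (which is automatic), and more substantively: every 2×2×2 complex tensor can be written as a limit of tensors of this form. Formally: the set of tensors {P : Fin 2 → Fin 2 → Fin 2 → ℂ | ∃ M1 M2 M3 : Matrix (Fin 2) (Fin 2) ℂ, ∀ i j k, P i j k = Σ b, M1 b i * M2 b j * M3 b k} is dense in the space of all 2×2×2 complex tensors (with its standard topology). -/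
/-!
Write `A` and `B` for the two slices `P(·,·,0)` and `P(·,·,1)`. The pencil `det (B - x A)` is a
quadratic in `x` whose discriminant is Cayley's hyperdeterminant of `P`. When `det A` and the
hyperdeterminant are both nonzero, the pencil has two distinct roots `γ ≠ δ`; then `B - γ A` and
`B - δ A` have rank one, and `A`, `B` are linear combinations of these two rank-one matrices,
which is a decomposition of `P` into two rank-one tensors. The product `det A * hyperdet P` is a
polynomial in the entries of `P` that does not vanish identically, so by the identity theorem its
nonvanishing locus is dense.
-/

open Topology Matrix

section Analytic

variable {𝕜 E F : Type*} [NontriviallyNormedField 𝕜] [NormedAddCommGroup E] [NormedSpace 𝕜 E]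
  [NormedAddCommGroup F] [NormedSpace 𝕜 F]

@[fun_prop]
theorem analyticAt_apply {ι : Type*} [Fintype ι] (i : ι) (x : ι → F) :
    AnalyticAt 𝕜 (fun f : ι → F => f i) x :=
  (ContinuousLinearMap.proj (R := 𝕜) (φ := fun _ => F) i).analyticAt x

theorem AnalyticOnNhd.dense_setOf_ne_zero [PreconnectedSpace E] {f : E → F}
    (hf : AnalyticOnNhd 𝕜 f Set.univ) {x₀ : E} (hx₀ : f x₀ ≠ 0) : Dense {x | f x ≠ 0} := by
  rw [← Set.compl_ofPred, ← interior_eq_empty_iff_dense_compl, Set.eq_empty_iff_forall_notMem]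
  intro z hz
  have hfz : f =ᶠ[𝓝 z] 0 := mem_interior_iff_mem_nhds.1 hz
  exact hx₀ (hf.eqOn_zero_of_preconnected_of_eventuallyEq_zero isPreconnected_univ
    (Set.mem_univ z) hfz (Set.mem_univ x₀))

end Analytic

namespace Matrix

variable {K : Type*} [Field K]

theorem exists_eq_vecMulVec_of_det_eq_zero {M : Matrix (Fin 2) (Fin 2) K} (h : M.det = 0) :
    ∃ a b : Fin 2 → K, M = vecMulVec a b := by
  rw [det_fin_two] at h
  by_cases h00 : M 0 0 = 0
  · by_cases h01 : M 0 1 = 0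
    · refine ⟨![0, 1], M 1, ?_⟩
      ext i j; fin_cases i <;> fin_cases j <;> simp [vecMulVec_apply, h00, h01]
    · have h10 : M 1 0 = 0 := by
        simpa [h00, h01] using h
      refine ⟨fun i => M i 1, ![0, 1], ?_⟩
      ext i j; fin_cases i <;> fin_cases j <;> simp [vecMulVec_apply, h00, h10]
  · refine ⟨fun i => M i 0, ![1, M 0 1 / M 0 0], ?_⟩
    ext i j
    fin_cases i <;> fin_cases j <;>
      simp only [Fin.zero_eta, Fin.mk_one, Fin.isValue, vecMulVec_apply, cons_val_zero,
        cons_val_one, cons_val_fin_one, mul_one]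
    · field_simp
    · field_simp
      linear_combination h

end Matrix

section Pencil

variable {K : Type*} [Field K]

/-- Polarization of the determinant: `det (A + B) = det A + mixedDet A B + det B`. -/
def mixedDet (A B : Matrix (Fin 2) (Fin 2) K) : K :=
  A 0 0 * B 1 1 + A 1 1 * B 0 0 - A 0 1 * B 1 0 - A 1 0 * B 0 1

theorem det_sub_smul_fin_two (A B : Matrix (Fin 2) (Fin 2) K) (x : K) :
    (B - x • A).det = A.det * (x * x) + -mixedDet A B * x + B.det := by
  simp only [det_fin_two, mixedDet, Matrix.sub_apply, Matrix.smul_apply, smul_eq_mul]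
  ring

def tensorSlice {ι κ μ : Type*} (P : ι → κ → μ → K) (k : μ) : Matrix ι κ K :=
  of fun i j => P i j k

/-- Cayley's hyperdeterminant, as the discriminant of the pencil `x ↦ det (B - x A)`. -/
def hyperdet (P : Fin 2 → Fin 2 → Fin 2 → K) : K :=
  discrim (tensorSlice P 0).det (-mixedDet (tensorSlice P 0) (tensorSlice P 1))
    (tensorSlice P 1).det

def HasTensorRankLeTwo (P : Fin 2 → Fin 2 → Fin 2 → K) : Prop :=
  ∃ M1 M2 M3 : Matrix (Fin 2) (Fin 2) K, ∀ i j k, P i j k = ∑ b : Fin 2, M1 b i * M2 b j * M3 b k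

theorem hasTensorRankLeTwo_of_det_sub_smul_eq_zero (P : Fin 2 → Fin 2 → Fin 2 → K) {γ δ : K}
    (hγδ : γ ≠ δ) (hγ : (tensorSlice P 1 - γ • tensorSlice P 0).det = 0)
    (hδ : (tensorSlice P 1 - δ • tensorSlice P 0).det = 0) : HasTensorRankLeTwo P := by
  obtain ⟨d, e, hde⟩ := exists_eq_vecMulVec_of_det_eq_zero hγ
  obtain ⟨u, v, huv⟩ := exists_eq_vecMulVec_of_det_eq_zero hδ
  have hsub : δ - γ ≠ 0 := sub_ne_zero.2 hγδ.symm
  -- `(δ - γ) A = (B - γ A) - (B - δ A)` and `(δ - γ) B = δ (B - γ A) - γ (B - δ A)`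
  refine ⟨![d, u], ![e, v], ![![(δ - γ)⁻¹, δ * (δ - γ)⁻¹], ![-(δ - γ)⁻¹, -γ * (δ - γ)⁻¹]],
    fun i j k => ?_⟩
  have hγij := congrFun (congrFun hde i) j
  have hδij := congrFun (congrFun huv i) j
  simp only [tensorSlice, Matrix.sub_apply, Matrix.smul_apply, of_apply, smul_eq_mul,
    vecMulVec_apply] at hγij hδij
  fin_cases k <;>
    simp only [Fin.zero_eta, Fin.mk_one, Fin.isValue, Fin.sum_univ_two, cons_val_zero,
      cons_val_one, cons_val_fin_one] <;>
    field_simp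
  · linear_combination hγij - hδij
  · linear_combination δ * hγij - γ * hδij

theorem hasTensorRankLeTwo_of_hyperdet_ne_zero [IsAlgClosed K] [NeZero (2 : K)]
    {P : Fin 2 → Fin 2 → Fin 2 → K} (hdet : (tensorSlice P 0).det ≠ 0) (hP : hyperdet P ≠ 0) :
    HasTensorRankLeTwo P := by
  obtain ⟨s, hs⟩ := IsAlgClosed.exists_eq_mul_self (hyperdet P)
  have hs0 : s ≠ 0 := by rintro rfl; exact hP (by simpa using hs)
  set a := (tensorSlice P 0).det
  set b := -mixedDet (tensorSlice P 0) (tensorSlice P 1)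
  have hroot (x : K) (hx : x = (-b + s) / (2 * a) ∨ x = (-b - s) / (2 * a)) :
      (tensorSlice P 1 - x • tensorSlice P 0).det = 0 :=
    (det_sub_smul_fin_two _ _ x).trans ((quadratic_eq_zero_iff hdet hs x).2 hx)
  refine hasTensorRankLeTwo_of_det_sub_smul_eq_zero P ?_ (hroot _ (.inl rfl)) (hroot _ (.inr rfl))
  rw [Ne, div_left_inj' (mul_ne_zero two_ne_zero hdet)]
  intro h
  have h2s : (2 : K) * s = 0 := by linear_combination h
  exact hs0 ((mul_eq_zero.1 h2s).resolve_left two_ne_zero)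

end Pencil

theorem stmt0 :
    Dense {P : Fin 2 → Fin 2 → Fin 2 → ℂ |
      ∃ M1 M2 M3 : Matrix (Fin 2) (Fin 2) ℂ,
        ∀ i j k, P i j k = ∑ b : Fin 2, M1 b i * M2 b j * M3 b k} := by
  set g : (Fin 2 → Fin 2 → Fin 2 → ℂ) → ℂ := fun P => (tensorSlice P 0).det * hyperdet P
  have hg : AnalyticOnNhd ℂ g Set.univ := fun P _ => by
    simp only [g, hyperdet, discrim, mixedDet, det_fin_two, tensorSlice, of_apply]
    fun_prop
  -- slices `1` and `diag 1 2`: `det A = 1` and `hyperdet = 3 ^ 2 - 4 * 2 = 1`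
  have hg₀ : g ![![![1, 1], ![0, 0]], ![![0, 0], ![1, 2]]] ≠ 0 := by
    norm_num [g, hyperdet, discrim, mixedDet, det_fin_two, tensorSlice]
  refine (hg.dense_setOf_ne_zero hg₀).mono fun P hP => ?_
  obtain ⟨hdet, hhyp⟩ := mul_ne_zero_iff.1 hP
  exact hasTensorRankLeTwo_of_hyperdet_ne_zero hdet hhyp
end

section
/- Consider the 3×3×4 complex tensor P = e₁⊗e₁⊗f₁ + e₂⊗e₂⊗f₂ + e₃⊗e₃⊗f₃ + e₁⊗e₂⊗f₄, where e_i are the standard basis vectors of ℂ³ and f_i of ℂ⁴; i.e. P(i,j,k) = [i=1∧j=1∧k=1] + [i=2∧j=2∧k=2] + [i=3∧j=3∧k=3] + [i=1∧j=2∧k=4]. Then every 3×3×3 subtensor of P (obtained by selecting 3 of the 4 values of the third index) has tensor rank at most 3, i.e. can be written as Σ_{b=1}^{3} u_b ⊗ v_b ⊗ w_b with u_b, v_b ∈ ℂ³ and w_b ∈ ℂ³. -/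
noncomputable def Ptensor (i j : Fin 3) (k : Fin 4) : ℂ :=
  (if i = 0 ∧ j = 0 ∧ k = 0 then 1 else 0) +
  (if i = 1 ∧ j = 1 ∧ k = 1 then 1 else 0) +
  (if i = 2 ∧ j = 2 ∧ k = 2 then 1 else 0) +
  (if i = 0 ∧ j = 1 ∧ k = 3 then 1 else 0)

def Arow : Fin 4 → Fin 3 := ![0, 1, 2, 0]
def Acol : Fin 4 → Fin 3 := ![0, 1, 2, 1]

lemma Ptensor_eq (i j : Fin 3) (m : Fin 4) :
    Ptensor i j m = (if i = Arow m then 1 else 0) * (if j = Acol m then 1 else 0) := by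
  fin_cases i <;> fin_cases j <;> fin_cases m <;> simp [Ptensor, Arow, Acol]

theorem stmt14 :
    ∀ s : Fin 3 → Fin 4, Function.Injective s →
      ∃ u v w : Fin 3 → Fin 3 → ℂ,
        ∀ i j k : Fin 3,
          Ptensor i j (s k) = ∑ b : Fin 3, u b i * v b j * w b k := by
  intro s _
  refine ⟨fun b i => if i = Arow (s b) then 1 else 0,
          fun b j => if j = Acol (s b) then 1 else 0,
          fun b k => if k = b then 1 else 0, ?_⟩
  intro i j k
  rw [Ptensor_eq]
  fin_cases k <;> simp [Fin.sum_univ_three]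
end
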